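/- arXiv:1412.1461 — 8 statements merged into one kernel-verified Lean document; each statement's English description precedes it below -/
import Mathlib

section
/- Let (λ_n)_{n∈ℕ} be a sequence of non-zero complex numbers such that liminf_{n→∞} |λ_{n+1}|/|λ_n| > 2. Then for every non-degenerate line segment I contained in ℂ \ {0} (i.e., I is the closed segment joining two distinct points u ≠ v, and 0 ∉ I), there is no entire function f : ℂ → ℂ such that for every b ∈ I the set {z ↦ f(z + λ_n·b) : n ∈ ℕ} is dense in the space of entire functions with the topology of locally uniform convergence; equivalently, there is no entire f such that for every b ∈ I, every entire g : ℂ → ℂ, every R > 0 and every ε > 0 there exists n with sup_{|z| ≤ R} |f(z + λ_n·b) − g(z)| < ε. -/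
/-!
Fix `r > 2` with `‖λ (n + 1)‖ ≥ r ‖λ n‖` eventually and test against `g z = z + a`. If
`f (· + c)` and `f (· + c')` are both `ε`-close to `g` on the unit disc and `‖c - c'‖ ≤ 2`,
comparing them at the midpoint `(c + c') / 2` gives `‖c - c'‖ < 2ε`. So for
`b t = u + t (v - u)` the parameters `t` that work for `λ n` form clusters: two of them at
distance `≤ 2 / (‖λ n‖ ‖v - u‖)` are at distance `< 2ε / (‖λ n‖ ‖v - u‖)`. As `r > 2`, these
scales shrink fast enough for nested intervals to produce a `t ∈ [0, 1]` avoiding the clusters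
of every large `n`, while a large `‖a‖` excludes the small `n`.
-/

open Set Filter AffineMap

theorem exists_eventually_mul_norm_le_norm_succ {E : Type*} [SeminormedAddCommGroup E]
    {lam : ℕ → E} {c : ℝ} (hc : 0 ≤ c)
    (h : (c : EReal) < liminf (fun n => ((‖lam (n + 1)‖ / ‖lam n‖ : ℝ) : EReal)) atTop) :
    ∃ r > c, ∀ᶠ n in atTop, 0 < ‖lam n‖ ∧ r * ‖lam n‖ ≤ ‖lam (n + 1)‖ := by
  obtain ⟨r, hcr, hr⟩ := EReal.exists_between_coe_real h
  have hcr : c < r := EReal.coe_lt_coe_iff.1 hcr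
  refine ⟨r, hcr, ?_⟩
  filter_upwards [eventually_lt_of_lt_liminf hr] with n hn
  have hn : r < ‖lam (n + 1)‖ / ‖lam n‖ := EReal.coe_lt_coe_iff.1 hn
  have hpos : 0 < ‖lam n‖ := by
    refine (norm_nonneg _).lt_of_ne fun h0 => ?_
    rw [← h0, div_zero] at hn
    linarith
  exact ⟨hpos, ((lt_div_iff₀ hpos).1 hn).le⟩

theorem tendsto_norm_atTop_of_eventually_mul_norm_le_norm_succ {E : Type*}
    [SeminormedAddCommGroup E] {lam : ℕ → E} {r : ℝ} (hr : 1 < r)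
    (h : ∀ᶠ n in atTop, 0 < ‖lam n‖ ∧ r * ‖lam n‖ ≤ ‖lam (n + 1)‖) :
    Tendsto (fun n => ‖lam n‖) atTop atTop := by
  obtain ⟨N, hN⟩ := eventually_atTop.1 h
  rw [← tendsto_add_atTop_iff_nat N]
  refine tendsto_atTop_of_geom_le (by simpa using (hN N le_rfl).1) hr fun n => ?_
  simpa only [add_right_comm n 1 N] using (hN (n + N) le_add_self).2

theorem IsCompact.exists_forall_le_norm_sub {X : Type*} [TopologicalSpace X] {K : Set X}
    (hK : IsCompact K) {f : X → ℂ} (hf : ContinuousOn f K) (δ : ℝ) :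
    ∃ a : ℂ, ∀ x ∈ K, δ ≤ ‖f x - a‖ := by
  obtain ⟨B, hB⟩ := hK.exists_bound_of_continuousOn hf
  refine ⟨((B + δ : ℝ) : ℂ), fun x hx => ?_⟩
  calc δ ≤ |B + δ| - B := by linarith [le_abs_self (B + δ)]
    _ ≤ ‖((B + δ : ℝ) : ℂ)‖ - ‖f x‖ := by
      rw [Complex.norm_real, Real.norm_eq_abs]; linarith [hB x hx]
    _ ≤ ‖f x - ((B + δ : ℝ) : ℂ)‖ := by rw [norm_sub_rev]; exact norm_sub_norm_le _ _

theorem norm_sub_lt_of_approx_add {E : Type*} [NormedAddCommGroup E] [NormedSpace ℝ E]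
    {f : E → E} {a c c' : E} {ε : ℝ}
    (hc : ∀ z, ‖z‖ ≤ 1 → ‖f (z + c) - (z + a)‖ < ε)
    (hc' : ∀ z, ‖z‖ ≤ 1 → ‖f (z + c') - (z + a)‖ < ε) (h : ‖c - c'‖ ≤ 2) :
    ‖c - c'‖ < 2 * ε := by
  set z : E := (2⁻¹ : ℝ) • (c' - c)
  have hz : ‖z‖ ≤ 1 := by
    rw [norm_smul, norm_sub_rev, Real.norm_of_nonneg (by norm_num)]
    linarith
  have hz' : ‖-z‖ ≤ 1 := by rwa [norm_neg]
  have hmid : -z + c' = z + c := by simp only [z]; module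
  calc ‖c - c'‖ = ‖(f (z + c) - (z + a)) - (f (-z + c') - (-z + a))‖ := by
        rw [hmid]; congr 1; simp only [z]; module
    _ ≤ ‖f (z + c) - (z + a)‖ + ‖f (-z + c') - (-z + a)‖ := norm_sub_le _ _
    _ < 2 * ε := by linarith [hc z hz, hc' (-z) hz']

theorem abs_sub_lt_of_approx_add_lineMap {f : ℂ → ℂ} {a u v μ : ℂ} {ε t t' : ℝ}
    (hμ : 0 < ‖μ‖ * ‖v - u‖)
    (ht : ∀ z, ‖z‖ ≤ 1 → ‖f (z + μ * lineMap u v t) - (z + a)‖ < ε)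
    (ht' : ∀ z, ‖z‖ ≤ 1 → ‖f (z + μ * lineMap u v t') - (z + a)‖ < ε)
    (h : |t - t'| ≤ 2 / (‖μ‖ * ‖v - u‖)) :
    |t - t'| < 2 * ε / (‖μ‖ * ‖v - u‖) := by
  have hdist :
      ‖μ * lineMap u v t - μ * lineMap u v t'‖ = |t - t'| * (‖μ‖ * ‖v - u‖) := by
    rw [← mul_sub, norm_mul, ← dist_eq_norm, dist_lineMap_lineMap, Real.dist_eq, dist_eq_norm']
    ring
  rw [le_div_iff₀ hμ, ← hdist] at h
  rw [lt_div_iff₀ hμ, ← hdist]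
  exact norm_sub_lt_of_approx_add ht ht' h

theorem exists_Icc_subset_disjoint_of_abs_sub_lt {S : Set ℝ} {p ℓ ℓ' d : ℝ}
    (hℓ' : 0 ≤ ℓ') (hd : 0 ≤ d) (hℓ : ℓ' + d ≤ ℓ / 2)
    (hS : ∀ t ∈ S ∩ Icc p (p + ℓ), ∀ t' ∈ S ∩ Icc p (p + ℓ), |t - t'| < d) :
    ∃ p', Icc p' (p' + ℓ') ⊆ Icc p (p + ℓ) ∧ Disjoint (Icc p' (p' + ℓ')) S := by
  have hleft : Icc p (p + ℓ') ⊆ Icc p (p + ℓ) := Icc_subset_Icc le_rfl (by linarith)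
  have hright : Icc (p + ℓ - ℓ') (p + ℓ - ℓ' + ℓ') ⊆ Icc p (p + ℓ) :=
    Icc_subset_Icc (by linarith) (by linarith)
  rcases (S ∩ Icc p (p + ℓ)).eq_empty_or_nonempty with hempty | ⟨t₀, ht₀⟩
  · refine ⟨p, hleft, disjoint_left.2 fun t ht htS => ?_⟩
    exact (eq_empty_iff_forall_notMem.1 hempty) t ⟨htS, hleft ht⟩
  -- the points of `S` in the interval cluster around `t₀`, so one half of it is free
  rcases le_or_gt t₀ (p + ℓ / 2) with h₀ | h₀
  · refine ⟨p + ℓ - ℓ', hright, disjoint_left.2 fun t ht htS => ?_⟩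
    have := abs_lt.1 (hS t ⟨htS, hright ht⟩ t₀ ht₀)
    linarith [ht.1]
  · refine ⟨p, hleft, disjoint_left.2 fun t ht htS => ?_⟩
    have := abs_lt.1 (hS t ⟨htS, hleft ht⟩ t₀ ht₀)
    linarith [ht.2]

theorem exists_mem_Icc_forall_notMem_of_abs_sub_lt (S : ℕ → Set ℝ) {l d : ℕ → ℝ}
    (hl : ∀ k, 0 ≤ l k) (hd : ∀ k, 0 ≤ d k) (hld : ∀ k, l (k + 1) + d k ≤ l k / 2)
    (hS : ∀ k, ∀ t ∈ S k, ∀ t' ∈ S k, |t - t'| ≤ l k → |t - t'| < d k) :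
    ∃ x ∈ Icc 0 (l 0), ∀ k, x ∉ S k := by
  have step : ∀ k p, ∃ p', Icc p' (p' + l (k + 1)) ⊆ Icc p (p + l k) ∧
      Disjoint (Icc p' (p' + l (k + 1))) (S k) := fun k p =>
    exists_Icc_subset_disjoint_of_abs_sub_lt (hl _) (hd k) (hld k) fun t ht t' ht' =>
      hS k t ht.1 t' ht'.1 <| by
        simpa [Real.dist_eq] using Real.dist_le_of_mem_Icc ht.2 ht'.2
  choose next hnext using step
  let P : ℕ → ℝ := fun n => Nat.rec 0 next n
  have hanti : Antitone fun n => Icc (P n) (P n + l n) :=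
    antitone_nat_of_succ_le fun k => (hnext k (P k)).1
  have hx := mem_iInter.1 <| ciSup_mem_iInter_Icc_of_antitone_Icc hanti fun n =>
    le_add_of_nonneg_right (hl n)
  refine ⟨_, by simpa [P] using hx 0, fun k hk => ?_⟩
  exact disjoint_left.1 (hnext k (P k)).2 (hx (k + 1)) hk

theorem exists_mem_Icc_forall_not_approx_add_lineMap {f : ℂ → ℂ} {a u v : ℂ} {μ : ℕ → ℂ}
    {r ε : ℝ} (hr : 0 < r) (hε : 0 ≤ ε) (hrε : 2 / r + 2 * ε ≤ 1)
    (hμ₀ : 2 ≤ ‖μ 0‖ * ‖v - u‖) (hμ : ∀ k, 0 < ‖μ k‖ ∧ r * ‖μ k‖ ≤ ‖μ (k + 1)‖) :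
    ∃ t ∈ Icc (0 : ℝ) 1, ∀ k,
      ¬ ∀ z, ‖z‖ ≤ 1 → ‖f (z + μ k * lineMap u v t) - (z + a)‖ < ε := by
  set G : ℕ → ℝ := fun k => ‖μ k‖ * ‖v - u‖
  have hL : 0 < ‖v - u‖ := pos_of_mul_pos_right (two_pos.trans_le hμ₀) (norm_nonneg _)
  have hG : ∀ k, 0 < G k := fun k => mul_pos (hμ k).1 hL
  have hshrink : ∀ k, 2 / G (k + 1) + 2 * ε / G k ≤ 2 / G k / 2 := fun k => by
    have hrG : r * G k ≤ G (k + 1) := by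
      simpa only [G, mul_assoc] using mul_le_mul_of_nonneg_right (hμ k).2 hL.le
    have := hG k
    calc 2 / G (k + 1) + 2 * ε / G k ≤ 2 / (r * G k) + 2 * ε / G k := by gcongr
      _ = (2 / r + 2 * ε) / G k := by field_simp
      _ ≤ 1 / G k := by gcongr
      _ = 2 / G k / 2 := by ring
  obtain ⟨t, ht, htS⟩ := exists_mem_Icc_forall_notMem_of_abs_sub_lt
    (fun k => {t | ∀ z, ‖z‖ ≤ 1 → ‖f (z + μ k * lineMap u v t) - (z + a)‖ < ε})
    (l := fun k => 2 / G k) (d := fun k => 2 * ε / G k)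
    (fun k => (div_pos two_pos (hG k)).le) (fun k => by have := hG k; positivity) hshrink
    fun k t ht t' ht' => abs_sub_lt_of_approx_add_lineMap (hG k) ht ht'
  exact ⟨t, ⟨ht.1, ht.2.trans ((div_le_one (hG 0)).2 hμ₀)⟩, htS⟩

theorem no_common_hypercyclic_on_segment_general
    (lam : ℕ → ℂ)
    (hliminf : (2 : EReal) <
      Filter.liminf (fun n => ((‖lam (n + 1)‖ / ‖lam n‖ : ℝ) : EReal)) Filter.atTop)
    (u v : ℂ) (huv : u ≠ v) :
    ¬ ∃ f : ℂ → ℂ, Differentiable ℂ f ∧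
      ∀ b ∈ segment ℝ u v, ∀ g : ℂ → ℂ, Differentiable ℂ g →
        ∀ R > (0 : ℝ), ∀ ε > (0 : ℝ), ∃ n : ℕ,
          ∀ z : ℂ, ‖z‖ ≤ R → ‖f (z + lam n * b) - g z‖ < ε := by
  rintro ⟨f, hf, hcyc⟩
  obtain ⟨r, hr, hgrowth⟩ :=
    exists_eventually_mul_norm_le_norm_succ zero_le_two (by exact_mod_cast hliminf)
  have hL : 0 < ‖v - u‖ := norm_pos_iff.2 (sub_ne_zero.2 huv.symm)
  obtain ⟨N, hN⟩ := eventually_atTop.1 <| hgrowth.and <|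
    ((tendsto_norm_atTop_of_eventually_mul_norm_le_norm_succ (by linarith) hgrowth
      ).atTop_mul_const hL).eventually_ge_atTop 2
  obtain ⟨ε, hε, hrε⟩ : ∃ ε > 0, 2 / r + 2 * ε ≤ 1 :=
    ⟨(1 - 2 / r) / 2, half_pos (sub_pos.2 ((div_lt_one (by linarith)).2 hr)), by linarith⟩
  -- `g = (· + a)` with `a` far from the values of `f` seen by the first `N` translates
  have hK :
      IsCompact (⋃ m ∈ Finset.range N, (fun t : ℝ => lam m * lineMap u v t) '' Icc 0 1) :=
    (Finset.range N).isCompact_biUnion fun m _ =>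
      isCompact_Icc.image (continuous_const.mul lineMap_continuous)
  obtain ⟨a, ha⟩ := hK.exists_forall_le_norm_sub hf.continuous.continuousOn ε
  obtain ⟨t, ht, htS⟩ := exists_mem_Icc_forall_not_approx_add_lineMap (f := f) (a := a)
    (μ := fun k => lam (N + k)) (by linarith) hε.le hrε (hN N le_rfl).2
    fun k => (hN (N + k) le_self_add).1
  obtain ⟨n, hn⟩ := hcyc (lineMap u v t)
    (segment_eq_image_lineMap ℝ u v ▸ mem_image_of_mem _ ht) (· + a)
    (differentiable_id.add_const a) 1 one_pos ε hε
  rcases lt_or_ge n N with hnN | hNn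
  · have hfar := ha _ (mem_biUnion (Finset.mem_range.2 hnN) (mem_image_of_mem _ ht))
    have hclose := hn 0 (by simp)
    simp only [zero_add] at hclose
    linarith
  · obtain ⟨k, rfl⟩ := Nat.exists_eq_add_of_le hNn
    exact htS k hn

/-- Non-existence of common hypercyclic entire functions for translations along a
non-degenerate line segment, when `liminf |λ_{n+1}|/|λ_n| > 2`. -/
theorem no_common_hypercyclic_on_segment
    (lam : ℕ → ℂ) (hlam : ∀ n, lam n ≠ 0)
    (hliminf : (2 : EReal) <
      Filter.liminf (fun n => ((‖lam (n + 1)‖ / ‖lam n‖ : ℝ) : EReal)) Filter.atTop)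
    (u v : ℂ) (huv : u ≠ v) (h0 : (0 : ℂ) ∉ segment ℝ u v) :
    ¬ ∃ f : ℂ → ℂ, Differentiable ℂ f ∧
      ∀ b ∈ segment ℝ u v, ∀ g : ℂ → ℂ, Differentiable ℂ g →
        ∀ R > (0 : ℝ), ∀ ε > (0 : ℝ), ∃ n : ℕ,
          ∀ z : ℂ, ‖z‖ ≤ R → ‖f (z + lam n * b) - g z‖ < ε :=
  no_common_hypercyclic_on_segment_general lam hliminf u v huv
end

section
/- There is no entire function f : ℂ → ℂ such that for every b ∈ ℂ \ {0} the set {z ↦ f(z + e^n·b) : n ∈ ℕ} is dense in the space of entire functions with the topology of locally uniform convergence; equivalently, there is no entire f such that for every non-zero b, every entire g : ℂ → ℂ, every R > 0 and every ε > 0 there exists n ∈ ℕ with sup_{|z| ≤ R} |f(z + e^n·b) − g(z)| < ε. -/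
/-!
Already `g = id` cannot be approximated along every orbit; the direction `b` is found by a
diagonal argument. Put `φ c = c - f c`, so that `f (z + w) - z = w - φ (z + w)`. We build `b`
so that every orbit point `eⁿ b` stays within `2/3` of a point `mₙ` at distance `1` from a
centre `cₙ` and at distance `≥ 1` from `φ cₙ`: the centres are `c₀ = 3`, `cₙ₊₁ = e mₙ`, and
`mₙ = cₙ ± 1`, the sign being chosen to avoid `φ cₙ`. The points `e⁻ⁿ mₙ` form a Cauchy sequence
whose limit `b` satisfies `‖mₙ - eⁿ b‖ ≤ 1 / (e - 1)`, and `z = cₙ - eⁿ b` then witnesses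
`‖f (z + eⁿ b) - z‖ ≥ 1/3` with `‖z‖ ≤ 2`.
-/

namespace NoCommonHypercyclic

variable (φ : ℂ → ℂ)

noncomputable def avoidingStep (c : ℂ) : ℂ :=
  if 1 ≤ ‖c + 1 - φ c‖ then c + 1 else c - 1

lemma norm_avoidingStep_sub (c : ℂ) : ‖avoidingStep φ c - c‖ = 1 := by
  unfold avoidingStep
  split_ifs <;> simp

lemma one_le_norm_avoidingStep_sub (c : ℂ) : 1 ≤ ‖avoidingStep φ c - φ c‖ := by
  unfold avoidingStep
  split_ifs with h
  · exact h
  · have : (2 : ℝ) ≤ ‖c + 1 - φ c‖ + ‖c - 1 - φ c‖ := by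
      calc (2 : ℝ) = ‖(c + 1 - φ c) - (c - 1 - φ c)‖ := by ring_nf; norm_num
        _ ≤ _ := norm_sub_le _ _
    linarith

variable (a c₀ : ℂ)

noncomputable def centre : ℕ → ℂ
  | 0 => c₀
  | n + 1 => a * avoidingStep φ (centre n)

lemma norm_avoidingStep_centre_sub_pow_mul_le (ha : 1 < ‖a‖) :
    ∃ b : ℂ, ∀ n : ℕ, ‖avoidingStep φ (centre φ a c₀ n) - a ^ n * b‖ ≤ 1 / (‖a‖ - 1) := by
  set m : ℕ → ℂ := fun n ↦ avoidingStep φ (centre φ a c₀ n)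
  set r : ℝ := ‖a‖⁻¹
  have ha₀ : a ≠ 0 := norm_pos_iff.mp (by linarith)
  have hr : r < 1 := inv_lt_one_of_one_lt₀ ha
  have hstep : ∀ n, dist ((a ^ n)⁻¹ * m n) ((a ^ (n + 1))⁻¹ * m (n + 1)) ≤ r * r ^ n := by
    intro n
    have : (a ^ n)⁻¹ * m n - (a ^ (n + 1))⁻¹ * m (n + 1)
        = -((a ^ (n + 1))⁻¹ * (m (n + 1) - centre φ a c₀ (n + 1))) := by
      simp only [centre, m]; field_simp; ring
    rw [dist_eq_norm, this, norm_neg, norm_mul, norm_avoidingStep_sub, norm_inv, norm_pow]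
    simp [r, pow_succ, mul_comm]
  obtain ⟨b, hb⟩ := cauchySeq_tendsto_of_complete (cauchySeq_of_le_geometric _ _ hr hstep)
  refine ⟨b, fun n ↦ ?_⟩
  have hdist := dist_le_of_le_geometric_of_tendsto _ _ hr hstep hb n
  have hscale : m n - a ^ n * b = a ^ n * ((a ^ n)⁻¹ * m n - b) := by
    field_simp
  calc ‖m n - a ^ n * b‖ = ‖a‖ ^ n * dist ((a ^ n)⁻¹ * m n) b := by
        rw [hscale, norm_mul, norm_pow, dist_eq_norm]
    _ ≤ ‖a‖ ^ n * (r * r ^ n / (1 - r)) := by gcongr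
    _ = 1 / (‖a‖ - 1) := by
        have : ‖a‖ - 1 ≠ 0 := by linarith
        simp only [r, inv_pow]; field_simp

lemma exists_ne_zero_forall_exists_norm_sub_le_and_le_norm_sub (ha : 5 / 2 ≤ ‖a‖) :
    ∃ b ≠ 0, ∀ n : ℕ, ∃ c : ℂ, ‖c - a ^ n * b‖ ≤ 2 ∧ 1 / 3 ≤ ‖a ^ n * b - φ c‖ := by
  obtain ⟨b, hb⟩ := norm_avoidingStep_centre_sub_pow_mul_le φ a 3 (by linarith)
  have htail : 1 / (‖a‖ - 1) ≤ 2 / 3 := by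
    rw [div_le_div_iff₀ (by linarith) (by norm_num)]; linarith
  have hnear : ∀ n, ‖avoidingStep φ (centre φ a 3 n) - a ^ n * b‖ ≤ 2 / 3 :=
    fun n ↦ (hb n).trans htail
  refine ⟨b, ?_, fun n ↦ ⟨centre φ a 3 n, ?_, ?_⟩⟩
  · rintro rfl
    have h₀ := hnear 0
    have h₁ := norm_avoidingStep_sub φ 3
    simp only [centre, mul_zero, sub_zero] at h₀ h₁
    have := norm_le_norm_add_norm_sub (avoidingStep φ 3) 3
    norm_num at this
    linarith
  · calc ‖centre φ a 3 n - a ^ n * b‖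
        ≤ ‖centre φ a 3 n - avoidingStep φ (centre φ a 3 n)‖
          + ‖avoidingStep φ (centre φ a 3 n) - a ^ n * b‖ :=
            norm_sub_le_norm_sub_add_norm_sub _ _ _
      _ ≤ 1 + 2 / 3 := by
          rw [norm_sub_rev, norm_avoidingStep_sub]; gcongr; exact hnear n
      _ ≤ 2 := by norm_num
  · have := norm_sub_le_norm_sub_add_norm_sub (avoidingStep φ (centre φ a 3 n)) (a ^ n * b)
      (φ (centre φ a 3 n))
    linarith [one_le_norm_avoidingStep_sub φ (centre φ a 3 n), hnear n]

lemma exists_ne_zero_forall_exists_le_norm_apply_add_sub (f : ℂ → ℂ) (ha : 5 / 2 ≤ ‖a‖) :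
    ∃ b ≠ 0, ∀ n : ℕ, ∃ z : ℂ, ‖z‖ ≤ 2 ∧ 1 / 3 ≤ ‖f (z + a ^ n * b) - z‖ := by
  obtain ⟨b, hb, hfar⟩ :=
    exists_ne_zero_forall_exists_norm_sub_le_and_le_norm_sub (fun c ↦ c - f c) a ha
  refine ⟨b, hb, fun n ↦ ?_⟩
  obtain ⟨c, hc, hfc⟩ := hfar n
  refine ⟨c - a ^ n * b, hc, ?_⟩
  rw [sub_add_cancel]
  convert hfc using 2
  ring

end NoCommonHypercyclic

/-- There is no entire function which is hypercyclic for all the translation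
families `(T_{e^n b})`, `b ≠ 0`. -/
theorem no_common_hypercyclic_exp :
    ¬ ∃ f : ℂ → ℂ, Differentiable ℂ f ∧
      ∀ b : ℂ, b ≠ 0 → ∀ g : ℂ → ℂ, Differentiable ℂ g →
        ∀ R > (0 : ℝ), ∀ ε > (0 : ℝ), ∃ n : ℕ,
          ∀ z : ℂ, ‖z‖ ≤ R → ‖f (z + (Real.exp n : ℂ) * b) - g z‖ < ε := by
  rintro ⟨f, -, hf⟩
  have he : 5 / 2 ≤ ‖((Real.exp 1 : ℝ) : ℂ)‖ := by
    rw [Complex.norm_real, Real.norm_of_nonneg (Real.exp_pos 1).le]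
    linarith [Real.exp_one_gt_d9]
  obtain ⟨b, hb, hbad⟩ :=
    NoCommonHypercyclic.exists_ne_zero_forall_exists_le_norm_apply_add_sub _ f he
  obtain ⟨n, hn⟩ := hf b hb id differentiable_id 2 two_pos (1 / 3) (by norm_num)
  obtain ⟨z, hz, hfz⟩ := hbad n
  have hexp : ((Real.exp n : ℝ) : ℂ) = ((Real.exp 1 : ℝ) : ℂ) ^ n := by
    rw [← Complex.ofReal_pow, ← Real.exp_nat_mul, mul_one]
  exact (hn z hz).not_ge (by rwa [hexp])
end

section
/- Let I ⊆ ℝ be a compact interval and let V ⊆ I be a set that is open in ℝ. Let a, A be positive real numbers with 2a ≤ A, and suppose that for all x, x̃ ∈ V, either |x − x̃| < a or |x − x̃| > A. Then at least one of the following holds: (i) the diameter of V is at most a; (ii) I \ V contains a closed interval of length A, i.e., there exists c ∈ ℝ with [c, c + A] ⊆ I \ V. -/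
/-!
Take `x + A < y` in `V` (they exist once `diam V > a`) and let `u` be the supremum of the
cluster `V ∩ ball x a` of `x`. A point `z ∈ V` above `u` is not in the cluster, so it is more
than `A` from `x`, hence at least `A - a ≥ a` and therefore more than `A` from every point of
the cluster: `z ≥ u + A`. So the open set `V` misses `(u, u + A)`, hence also its closure
`[u, u + A]`, which lies between `x` and `y`, so inside `I`.
-/

open Set Metric

theorem IsOpen.disjoint_Icc_of_disjoint_Ioo {V : Set ℝ} {u v : ℝ} (hV : IsOpen V) (huv : u < v)
    (hd : Disjoint V (Ioo u v)) : Disjoint V (Icc u v) :=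
  closure_Ioo huv.ne ▸ hd.closure_right hV

section Separated

variable {V : Set ℝ} {a A : ℝ}

theorem lt_sub_of_separated (hsep : ∀ x ∈ V, ∀ y ∈ V, |x - y| < a ∨ A < |x - y|)
    (ha : 0 ≤ a) {x y : ℝ} (hx : x ∈ V) (hy : y ∈ V) (h : a ≤ x - y) : A < x - y := by
  have habs : |x - y| = x - y := abs_of_nonneg (ha.trans h)
  rw [← habs] at h ⊢
  exact (hsep x hx y hy).resolve_left h.not_gt

theorem exists_add_lt_of_lt_diam (hsep : ∀ x ∈ V, ∀ y ∈ V, |x - y| < a ∨ A < |x - y|)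
    (ha : 0 ≤ a) (hdiam : a < diam V) : ∃ x ∈ V, ∃ y ∈ V, x + A < y := by
  obtain ⟨p, hp, q, hq, hpq⟩ : ∃ p ∈ V, ∃ q ∈ V, a < |p - q| := by
    by_contra! h
    exact hdiam.not_ge (diam_le_of_forall_dist_le ha h)
  rcases le_total q p with hqp | hpq'
  · rw [abs_of_nonneg (sub_nonneg.2 hqp)] at hpq
    exact ⟨q, hq, p, hp, by linarith [lt_sub_of_separated hsep ha hp hq hpq.le]⟩
  · rw [abs_sub_comm, abs_of_nonneg (sub_nonneg.2 hpq')] at hpq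
    exact ⟨p, hp, q, hq, by linarith [lt_sub_of_separated hsep ha hq hp hpq.le]⟩

theorem bddAbove_inter_ball (x : ℝ) : BddAbove (V ∩ ball x a) :=
  ⟨x + a, fun _ hz => (Real.ball_eq_Ioo x a ▸ hz.2).2.le⟩

theorem le_sSup_inter_ball (ha : 0 < a) {x : ℝ} (hx : x ∈ V) : x ≤ sSup (V ∩ ball x a) :=
  le_csSup (bddAbove_inter_ball x) ⟨hx, mem_ball_self ha⟩

theorem sSup_inter_ball_le (ha : 0 < a) {x : ℝ} (hx : x ∈ V) : sSup (V ∩ ball x a) ≤ x + a :=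
  csSup_le ⟨x, hx, mem_ball_self ha⟩ fun _ hz => (Real.ball_eq_Ioo x a ▸ hz.2).2.le

theorem sSup_inter_ball_add_le (hsep : ∀ x ∈ V, ∀ y ∈ V, |x - y| < a ∨ A < |x - y|)
    (ha : 0 < a) (h2a : 2 * a ≤ A) {x z : ℝ} (hx : x ∈ V) (hz : z ∈ V)
    (hlt : sSup (V ∩ ball x a) < z) : sSup (V ∩ ball x a) + A ≤ z := by
  have hxz : x < z := (le_sSup_inter_ball ha hx).trans_lt hlt
  have hzx : a ≤ z - x := by
    by_contra! h
    have hz_mem : z ∈ V ∩ ball x a := by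
      rw [← abs_of_pos (sub_pos.2 hxz), ← Real.dist_eq] at h
      exact ⟨hz, h⟩
    exact hlt.not_ge (le_csSup (bddAbove_inter_ball x) hz_mem)
  have hAzx := lt_sub_of_separated hsep ha.le hz hx hzx
  suffices ∀ p ∈ V ∩ ball x a, p ≤ z - A by
    linarith [csSup_le (⟨x, hx, mem_ball_self ha⟩ : (V ∩ ball x a).Nonempty) this]
  rintro p ⟨hp, hpx⟩
  have hpx' : p < x + a := (Real.ball_eq_Ioo x a ▸ hpx).2
  linarith [lt_sub_of_separated hsep ha.le hz hp (by linarith)]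

end Separated

theorem diam_small_or_compl_contains_interval_general
    (s t : ℝ) (V : Set ℝ) (hVI : V ⊆ Set.Icc s t) (hVopen : IsOpen V)
    (a A : ℝ) (ha : 0 < a) (h2a : 2 * a ≤ A)
    (hsep : ∀ x ∈ V, ∀ y ∈ V, |x - y| < a ∨ A < |x - y|) :
    Metric.diam V ≤ a ∨ ∃ c : ℝ, Set.Icc c (c + A) ⊆ Set.Icc s t \ V := by
  refine or_iff_not_imp_left.2 fun hdiam => ?_
  obtain ⟨x, hx, y, hy, hxy⟩ := exists_add_lt_of_lt_diam hsep ha.le (not_le.1 hdiam)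
  set u := sSup (V ∩ ball x a)
  have hxu : x ≤ u := le_sSup_inter_ball ha hx
  have huy : u + A ≤ y :=
    sSup_inter_ball_add_le hsep ha h2a hx hy (by linarith [sSup_inter_ball_le ha hx])
  have hgap : Disjoint V (Ioo u (u + A)) := disjoint_right.2 fun z hz hzV =>
    (sSup_inter_ball_add_le hsep ha h2a hx hzV hz.1).not_gt hz.2
  have hgap' := hVopen.disjoint_Icc_of_disjoint_Ioo (by linarith) hgap
  refine ⟨u, fun z hz => ⟨⟨?_, ?_⟩, disjoint_right.1 hgap' hz⟩⟩
  · linarith [(hVI hx).1, hz.1]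
  · linarith [(hVI hy).2, hz.2]

/-- Lemma 1: if any two points of an open set `V` inside a compact interval are at
distance `< a` or `> A` (with `2a ≤ A`), then either `diam V ≤ a` or the complement
`I \ V` contains a closed interval of length `A`. -/
theorem diam_small_or_compl_contains_interval
    (s t : ℝ) (hst : s ≤ t) (V : Set ℝ) (hVI : V ⊆ Set.Icc s t) (hVopen : IsOpen V)
    (a A : ℝ) (ha : 0 < a) (hA : 0 < A) (h2a : 2 * a ≤ A)
    (hsep : ∀ x ∈ V, ∀ y ∈ V, |x - y| < a ∨ A < |x - y|) :
    Metric.diam V ≤ a ∨ ∃ c : ℝ, Set.Icc c (c + A) ⊆ Set.Icc s t \ V :=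
  diam_small_or_compl_contains_interval_general s t V hVI hVopen a A ha h2a hsep
end

section
/- Let a, A be positive real numbers with 2a ≤ A. Let I ⊆ ℝ be a compact interval and let V ⊆ I be a set that is open in ℝ. Assume that (i) the length of I is at least 2A + a, and (ii) for all x, y ∈ V, either |x − y| < a or |x − y| > A. Then I \ V contains a closed interval of length A, i.e., there exists c ∈ ℝ with [c, c + A] ⊆ I \ V. -/
/-!
Pick a point `x ∈ V` in the first `A` units of `I` (if there is none, `[s, s + A]` works) and let
`d` be the supremum of the points of `V` within `a` of `x`. A point `z ∈ V` with `d < z < d + A`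
would lie within `a` of some `y ∈ V` close to `d`, hence less than `2a ≤ A` from `x`; since `z` is
beyond `d`, it is at least `a` from `x`, contradicting the separation. So `V` misses `(d, d + A)`,
and being open it misses the closure `[d, d + A]`, which fits in `I` by the length bound.
-/

open Set

theorem IsOpen.disjoint_Icc_of_disjoint_Ioo_s4 {α : Type*} [TopologicalSpace α] [LinearOrder α]
    [OrderTopology α] [DenselyOrdered α] {U : Set α} (hU : IsOpen U) {b c : α} (hbc : b ≠ c)
    (h : Disjoint U (Ioo b c)) : Disjoint U (Icc b c) := by
  simpa only [closure_Ioo hbc] using h.closure_right hU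

section Separated

variable {a A : ℝ} {V : Set ℝ}

theorem exists_disjoint_Ioo_of_separated (ha : 0 < a) (h2a : 2 * a ≤ A)
    (hsep : ∀ x ∈ V, ∀ y ∈ V, |x - y| < a ∨ A < |x - y|) {x : ℝ} (hxV : x ∈ V) :
    ∃ d ∈ Icc x (x + a), Disjoint V (Ioo d (d + A)) := by
  set C := V ∩ Ioo (x - a) (x + a)
  have hxC : x ∈ C := ⟨hxV, by linarith, by linarith⟩
  have hbdd : BddAbove C := ⟨x + a, fun y hy => hy.2.2.le⟩
  refine ⟨sSup C, ⟨le_csSup hbdd hxC, csSup_le ⟨x, hxC⟩ fun y hy => hy.2.2.le⟩, ?_⟩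
  rw [Set.disjoint_left]
  rintro z hzV ⟨hdz, hzd⟩
  obtain ⟨y, hyC, hzy⟩ := exists_lt_of_lt_csSup ⟨x, hxC⟩ (show z - A < sSup C by linarith)
  have hyz : y < z := (le_csSup hbdd hyC).trans_lt hdz
  have hzy_lt : z - y < a := by
    rcases hsep z hzV y hyC.1 with h | h
    · exact (abs_lt.1 h).2
    · rw [abs_of_pos (by linarith)] at h
      linarith
  have hzC : z ∉ C := fun hzC => (le_csSup hbdd hzC).not_gt hdz
  have hxz : x < z := (le_csSup hbdd hxC).trans_lt hdz
  rcases hsep z hzV x hxV with h | h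
  · exact hzC ⟨hzV, by linarith [(abs_lt.1 h).1], by linarith [(abs_lt.1 h).2]⟩
  · rw [abs_of_pos (by linarith)] at h
    linarith [hyC.2.2]

theorem exists_disjoint_Icc_of_separated (hVopen : IsOpen V) (ha : 0 < a) (h2a : 2 * a ≤ A)
    (hsep : ∀ x ∈ V, ∀ y ∈ V, |x - y| < a ∨ A < |x - y|) {x : ℝ} (hxV : x ∈ V) :
    ∃ d ∈ Icc x (x + a), Disjoint V (Icc d (d + A)) := by
  obtain ⟨d, hd, hdisj⟩ := exists_disjoint_Ioo_of_separated ha h2a hsep hxV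
  exact ⟨d, hd, hVopen.disjoint_Icc_of_disjoint_Ioo_s4 (by linarith) hdisj⟩

end Separated

theorem compl_contains_interval_general
    (a A : ℝ) (ha : 0 < a) (h2a : 2 * a ≤ A)
    (s t : ℝ) (hlen : 2 * A + a ≤ t - s)
    (V : Set ℝ) (hVopen : IsOpen V)
    (hsep : ∀ x ∈ V, ∀ y ∈ V, |x - y| < a ∨ A < |x - y|) :
    ∃ c : ℝ, Set.Icc c (c + A) ⊆ Set.Icc s t \ V := by
  by_cases hstart : Disjoint V (Icc s (s + A))
  · exact ⟨s, subset_sdiff.2 ⟨Icc_subset_Icc_right (by linarith), hstart.symm⟩⟩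
  · obtain ⟨x, hxV, hxs, hxsA⟩ := not_disjoint_iff.1 hstart
    obtain ⟨d, ⟨hxd, hdx⟩, hdisj⟩ := exists_disjoint_Icc_of_separated hVopen ha h2a hsep hxV
    exact ⟨d, subset_sdiff.2 ⟨Icc_subset_Icc (by linarith) (by linarith), hdisj.symm⟩⟩

/-- Corollary 1: if moreover the interval has length at least `2A + a`, then
`I \ V` contains a closed interval of length `A`. -/
theorem compl_contains_interval
    (a A : ℝ) (ha : 0 < a) (hA : 0 < A) (h2a : 2 * a ≤ A)
    (s t : ℝ) (hst : s ≤ t) (hlen : 2 * A + a ≤ t - s)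
    (V : Set ℝ) (hVI : V ⊆ Set.Icc s t) (hVopen : IsOpen V)
    (hsep : ∀ x ∈ V, ∀ y ∈ V, |x - y| < a ∨ A < |x - y|) :
    ∃ c : ℝ, Set.Icc c (c + A) ⊆ Set.Icc s t \ V :=
  compl_contains_interval_general a A ha h2a s t hlen V hVopen hsep
end

section
/- Let a, A be positive real numbers with 2a ≤ A. Let I ⊆ ℂ be a line segment (the closed segment joining two points u, v ∈ ℂ) and let V ⊆ ℂ be a set that is open in ℂ. Assume that (i) the length |u − v| of I is at least 2A + a, and (ii) for all z, w ∈ V, either |z − w| < a or |z − w| > A. Then I \ V contains a line segment of length A, i.e., there exist p, q ∈ I with |p − q| = A and the closed segment joining p and q is contained in I \ V. -/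
/-!
Parametrize the segment by arc length, `t ↦ f t` with `t ∈ [0, L]`, `L = ‖u - v‖`; the preimage
`T` of `V` is an open subset of `ℝ` with the same separation property. If `T` misses `[0, A]`
we are done. Otherwise pick `t₀ ∈ T ∩ [0, A]` and let `M` be the supremum of the points of `T`
below `t₀ + a`. A point `t ∈ T` with `M < t < M + A` is not within `a` of `t₀`, so it is
farther than `A` from `t₀`; but then its distance to points of `T` just below `M` lies in
`(A - a, A)`, which is impossible since `A - a ≥ a`. Hence `T` misses `(M, M + A)`, and, being open,
also its closure `[M, M + A]`, which lies in `[0, 2A + a]` because `M ≤ t₀ + a ≤ A + a`.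
-/

open Set

section Line

variable {a A : ℝ} {T : Set ℝ}

lemma exists_Icc_disjoint_of_mem (hA : 0 < A) (h2a : 2 * a ≤ A) (hT : IsOpen T)
    (hsep : ∀ s ∈ T, ∀ t ∈ T, |s - t| < a ∨ A < |s - t|) {t₀ : ℝ} (ht₀ : t₀ ∈ T) :
    ∃ M ∈ Icc t₀ (t₀ + a), Disjoint (Icc M (M + A)) T := by
  set W := T ∩ Iic (t₀ + a)
  have hW : BddAbove W := ⟨t₀ + a, fun _ ht => ht.2⟩
  have ha : 0 < a := by
    simpa [hA.not_gt] using hsep t₀ ht₀ t₀ ht₀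
  have ht₀W : t₀ ∈ W := ⟨ht₀, mem_Iic.2 (by linarith)⟩
  have ht₀M : t₀ ≤ sSup W := le_csSup hW ht₀W
  have hgap : Disjoint (Ioo (sSup W) (sSup W + A)) T := by
    refine disjoint_left.2 fun t ⟨hMt, htMA⟩ htT => ?_
    rcases hsep t htT t₀ ht₀ with hnear | hfar
    · have htW : t ∈ W := ⟨htT, mem_Iic.2 (by linarith [(abs_lt.1 hnear).2])⟩
      linarith [le_csSup hW htW]
    · rw [abs_of_pos (by linarith)] at hfar
      obtain ⟨t', ht'W, ht't⟩ := exists_lt_of_lt_csSup ⟨t₀, ht₀W⟩ (by linarith : t - A < sSup W)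
      have ht'M : t' ≤ sSup W := le_csSup hW ht'W
      have ht't₀ : t' ≤ t₀ + a := ht'W.2
      rcases hsep t htT t' ht'W.1 with h | h <;> rw [abs_of_pos (by linarith)] at h <;> linarith
  refine ⟨sSup W, ⟨ht₀M, csSup_le ⟨t₀, ht₀W⟩ fun _ ht => ht.2⟩, ?_⟩
  rw [← closure_Ioo (by linarith : sSup W ≠ sSup W + A)]
  exact hgap.closure_left hT

lemma exists_Icc_subset_Icc_diff (ha : 0 < a) (hA : 0 < A) (h2a : 2 * a ≤ A) {L : ℝ}
    (hL : 2 * A + a ≤ L) (hT : IsOpen T) (hsep : ∀ s ∈ T, ∀ t ∈ T, |s - t| < a ∨ A < |s - t|) :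
    ∃ c, Icc c (c + A) ⊆ Icc 0 L \ T := by
  by_cases h : Disjoint (Icc 0 A) T
  · exact ⟨0, subset_sdiff.2 ⟨Icc_subset_Icc le_rfl (by linarith), by simpa using h⟩⟩
  obtain ⟨t₀, ⟨ht₀0, ht₀A⟩, ht₀⟩ := not_disjoint_iff.1 h
  obtain ⟨M, ⟨ht₀M, hMa⟩, hM⟩ := exists_Icc_disjoint_of_mem hA h2a hT hsep ht₀
  exact ⟨M, subset_sdiff.2 ⟨Icc_subset_Icc (by linarith) (by linarith), hM⟩⟩

end Line

lemma exists_affineMap_isometry {E : Type*} [NormedAddCommGroup E] [NormedSpace ℝ E]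
    {u v : E} (huv : u ≠ v) : ∃ f : ℝ →ᵃ[ℝ] E, Isometry f ∧ f 0 = u ∧ f (dist u v) = v := by
  have hd : dist u v ≠ 0 := dist_ne_zero.2 huv
  set w := (dist u v)⁻¹ • (v - u)
  have hw : dist u (u + w) = 1 := by
    rw [dist_eq_norm, sub_add_cancel_left, norm_neg, norm_smul, norm_inv, Real.norm_eq_abs,
      abs_dist, ← dist_eq_norm_sub', inv_mul_cancel₀ hd]
  refine ⟨AffineMap.lineMap u (u + w), Isometry.of_dist_eq fun s t => ?_, by simp, ?_⟩
  · rw [dist_lineMap_lineMap, hw, mul_one]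
  · simp [AffineMap.lineMap_apply, w, smul_smul, mul_inv_cancel₀ hd]

/-- Corollary 2 (complex version): a line segment of length at least `2A + a` minus
an open set `V` (any two of whose points are at distance `< a` or `> A`, `2a ≤ A`)
contains a line segment of length `A`. -/
theorem segment_diff_contains_segment
    (a A : ℝ) (ha : 0 < a) (hA : 0 < A) (h2a : 2 * a ≤ A)
    (u v : ℂ) (hlen : 2 * A + a ≤ ‖u - v‖)
    (V : Set ℂ) (hVopen : IsOpen V)
    (hsep : ∀ z ∈ V, ∀ w ∈ V, ‖z - w‖ < a ∨ A < ‖z - w‖) :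
    ∃ p ∈ segment ℝ u v, ∃ q ∈ segment ℝ u v,
      ‖p - q‖ = A ∧ segment ℝ p q ⊆ segment ℝ u v \ V := by
  rw [← dist_eq_norm] at hlen
  have huv : u ≠ v := dist_pos.1 (by linarith)
  obtain ⟨f, hf, hf0, hfL⟩ := exists_affineMap_isometry huv
  have hsegment {x y : ℝ} (hxy : x ≤ y) : segment ℝ (f x) (f y) = f '' Icc x y := by
    rw [← image_segment, segment_eq_Icc hxy]
  obtain ⟨c, hc⟩ := exists_Icc_subset_Icc_diff ha hA h2a hlen (hVopen.preimage hf.continuous)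
    fun s hs t ht => by simpa only [← dist_eq_norm, hf.dist_eq, Real.dist_eq] using hsep _ hs _ ht
  have hsub : segment ℝ (f c) (f (c + A)) ⊆ segment ℝ u v \ V := by
    rw [hsegment (by linarith), ← hf0, ← hfL, hsegment dist_nonneg, ← image_sdiff_preimage]
    exact image_mono hc
  refine ⟨f c, (hsub (left_mem_segment _ _ _)).1, f (c + A), (hsub (right_mem_segment _ _ _)).1,
    ?_, hsub⟩
  rw [← dist_eq_norm, hf.dist_eq, Real.dist_eq, sub_add_cancel_left, abs_neg, abs_of_pos hA]
end

section
/- Let k > 0 be a real number, λ ∈ ℂ \ {0}, and f : ℂ → ℂ any function. Define V_λ(f,k) = { b ∈ ℂ : sup_{|z| ≤ k} |f(z + λ·b) − z| < 1/k }. If b₁, b₂ ∈ V_λ(f,k), then either |b₁ − b₂| < 2/(k·|λ|) or |b₁ − b₂| > 2k/|λ|. -/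
theorem norm_sub_lt_two_mul_of_forall_norm_sub_lt {E : Type*} [NormedAddCommGroup E]
    [NormedSpace ℝ E] {f : E → E} {p q : E} {r ε : ℝ}
    (hp : ∀ z : E, ‖z‖ ≤ r → ‖f (z + p) - z‖ < ε)
    (hq : ∀ z : E, ‖z‖ ≤ r → ‖f (z + q) - z‖ < ε)
    (hpq : ‖p - q‖ ≤ 2 * r) : ‖p - q‖ < 2 * ε := by
  -- `z + p` and `-z + q` are both the midpoint of `p` and `q`, while `z` and `-z` are `‖p - q‖` apart
  set z : E := (2 : ℝ)⁻¹ • (q - p)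
  have hz : ‖z‖ ≤ r := by
    rw [norm_smul, norm_sub_rev]; norm_num; linarith
  have hmid : -z + q = z + p := by
    simp only [z]; module
  have h₁ := hp z hz
  have h₂ := hq (-z) (by rwa [norm_neg])
  rw [hmid] at h₂
  have hdiff : (f (z + p) - -z) - (f (z + p) - z) = q - p := by
    simp only [z]; module
  calc ‖p - q‖ = ‖(f (z + p) - -z) - (f (z + p) - z)‖ := by rw [hdiff, norm_sub_rev]
    _ ≤ ‖f (z + p) - -z‖ + ‖f (z + p) - z‖ := norm_sub_le _ _
    _ < ε + ε := add_lt_add h₂ h₁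
    _ = 2 * ε := by ring

theorem dist_mem_V_lt_or_gt_general
    (k : ℝ) (lam : ℂ) (hlam : lam ≠ 0) (f : ℂ → ℂ)
    (b₁ b₂ : ℂ)
    (hb₁ : ∀ z : ℂ, ‖z‖ ≤ k → ‖f (z + lam * b₁) - z‖ < 1 / k)
    (hb₂ : ∀ z : ℂ, ‖z‖ ≤ k → ‖f (z + lam * b₂) - z‖ < 1 / k) :
    ‖b₁ - b₂‖ < 2 / (k * ‖lam‖) ∨ 2 * k / ‖lam‖ < ‖b₁ - b₂‖ := by
  have hlam' : 0 < ‖lam‖ := norm_pos_iff.mpr hlam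
  have hnorm : ‖lam * b₁ - lam * b₂‖ = ‖b₁ - b₂‖ * ‖lam‖ := by
    rw [← mul_sub, norm_mul, mul_comm]
  refine (le_or_gt ‖b₁ - b₂‖ (2 * k / ‖lam‖)).imp (fun hle => ?_) id
  have hclose := norm_sub_lt_two_mul_of_forall_norm_sub_lt hb₁ hb₂
    (by rw [hnorm]; exact (le_div_iff₀ hlam').mp hle)
  rw [hnorm, mul_one_div, ← lt_div_iff₀ hlam', div_div] at hclose
  exact hclose

/-- Lemma 3: any two points of `V_λ(f,k)` are at distance `< 2/(k|λ|)` or `> 2k/|λ|`. -/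
theorem dist_mem_V_lt_or_gt
    (k : ℝ) (hk : 0 < k) (lam : ℂ) (hlam : lam ≠ 0) (f : ℂ → ℂ)
    (b₁ b₂ : ℂ)
    (hb₁ : ∀ z : ℂ, ‖z‖ ≤ k → ‖f (z + lam * b₁) - z‖ < 1 / k)
    (hb₂ : ∀ z : ℂ, ‖z‖ ≤ k → ‖f (z + lam * b₂) - z‖ < 1 / k) :
    ‖b₁ - b₂‖ < 2 / (k * ‖lam‖) ∨ 2 * k / ‖lam‖ < ‖b₁ - b₂‖ :=
  dist_mem_V_lt_or_gt_general k lam hlam f b₁ b₂ hb₁ hb₂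
end

section
/- Let I ⊆ ℝ be a compact interval, V ⊆ I a set that is open in ℝ, and a, A positive real numbers with 2a ≤ A such that for all x, y ∈ V, either |x − y| < a or |x − y| > A. Then there exist finitely many pairwise disjoint sets V₁, …, V_n, each open in ℝ, whose union equals V, such that each V_i has diameter at most a, and dist(V_i, V_j) ≥ A for all i ≠ j (i.e., |x − y| ≥ A whenever x ∈ V_i, y ∈ V_j, i ≠ j). -/
/-!
If any two points of `V` are closer than `a` or farther than `A ≥ 2a`, then being closer
than `a` is transitive on `V`: two steps give distance `< 2a ≤ A`, hence `< a`. The pieces are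
therefore the classes `V ∩ ball x a` of an equivalence relation; they are open, have diameter
`≤ a`, and points in distinct classes are more than `A` apart. A bounded subset of `ℝ` is totally
bounded, so every class is the class of a point of a finite `a`-net of `V` lying in `V`.
-/

open Metric Set

section Clusters

variable {X : Type*} [PseudoMetricSpace X] {V : Set X} {a A : ℝ} {x y u v : X}

def GapSeparated (V : Set X) (a A : ℝ) : Prop :=
  ∀ x ∈ V, ∀ y ∈ V, dist x y < a ∨ A < dist x y

def cluster (V : Set X) (a : ℝ) (x : X) : Set X := V ∩ ball x a

def clusters (V : Set X) (a : ℝ) : Set (Set X) := cluster V a '' V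

lemma isOpen_cluster (hV : IsOpen V) : IsOpen (cluster V a x) :=
  hV.inter isOpen_ball

lemma sUnion_clusters (ha : 0 < a) : ⋃₀ clusters V a = V := by
  refine (sUnion_subset ?_).antisymm fun x hx => ⟨_, mem_image_of_mem _ hx, hx, mem_ball_self ha⟩
  rintro _ ⟨x, -, rfl⟩
  exact inter_subset_left

namespace GapSeparated

lemma dist_lt_of_lt_two_mul (hV : GapSeparated V a A) (h2a : 2 * a ≤ A) (hx : x ∈ V)
    (hy : y ∈ V) (h : dist x y < 2 * a) : dist x y < a :=
  (hV x hx y hy).resolve_right (not_lt.2 (by linarith))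

lemma cluster_eq (hV : GapSeparated V a A) (h2a : 2 * a ≤ A) (hx : x ∈ V) (hy : y ∈ V)
    (hxy : dist x y < a) : cluster V a x = cluster V a y := by
  suffices ∀ {x y}, y ∈ V → dist x y < a → cluster V a x ⊆ cluster V a y from
    (this hy hxy).antisymm (this hx (dist_comm x y ▸ hxy))
  rintro x y hy hxy u ⟨hu, hux⟩
  exact ⟨hu, hV.dist_lt_of_lt_two_mul h2a hu hy (by linarith [dist_triangle u x y, mem_ball.1 hux])⟩

lemma cluster_eq_of_mem (hV : GapSeparated V a A) (h2a : 2 * a ≤ A) (hx : x ∈ V)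
    (hu : u ∈ cluster V a x) : cluster V a u = cluster V a x :=
  hV.cluster_eq h2a hu.1 hx hu.2

lemma diam_cluster_le (hV : GapSeparated V a A) (h2a : 2 * a ≤ A) (ha : 0 ≤ a) :
    diam (cluster V a x) ≤ a :=
  diam_le_of_forall_dist_le ha fun u hu v hv =>
    (hV.dist_lt_of_lt_two_mul h2a hu.1 hv.1
      (by linarith [dist_triangle_right u v x, mem_ball.1 hu.2, mem_ball.1 hv.2])).le

lemma pairwiseDisjoint_clusters (hV : GapSeparated V a A) (h2a : 2 * a ≤ A) :
    (clusters V a).PairwiseDisjoint id := by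
  rintro _ ⟨x, hx, rfl⟩ _ ⟨y, hy, rfl⟩ hne
  exact disjoint_left.2 fun u hux huy =>
    hne (by rw [← hV.cluster_eq_of_mem h2a hx hux, hV.cluster_eq_of_mem h2a hy huy])

lemma pairwise_lt_dist_clusters (hV : GapSeparated V a A) (h2a : 2 * a ≤ A) :
    (clusters V a).Pairwise fun P Q => ∀ u ∈ P, ∀ v ∈ Q, A < dist u v := by
  rintro _ ⟨x, hx, rfl⟩ _ ⟨y, hy, rfl⟩ hne u hu v hv
  refine (hV u hu.1 v hv.1).resolve_left fun huv => hne ?_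
  rw [← hV.cluster_eq_of_mem h2a hx hu, ← hV.cluster_eq_of_mem h2a hy hv,
    hV.cluster_eq h2a hu.1 hv.1 huv]

lemma finite_clusters (hV : GapSeparated V a A) (h2a : 2 * a ≤ A) (ha : 0 < a)
    (hVb : TotallyBounded V) : (clusters V a).Finite := by
  obtain ⟨T, hTV, hT, hVT⟩ := finite_approx_of_totallyBounded hVb a ha
  refine (hT.image (cluster V a)).subset ?_
  rintro _ ⟨x, hx, rfl⟩
  obtain ⟨y, hyT, hxy⟩ := mem_iUnion₂.1 (hVT hx)
  exact ⟨y, hyT, (hV.cluster_eq h2a hx (hTV hyT) hxy).symm⟩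

end GapSeparated

end Clusters

theorem open_set_splits_into_clusters_general
    (s t : ℝ) (V : Set ℝ) (hVI : V ⊆ Set.Icc s t) (hVopen : IsOpen V)
    (a A : ℝ) (ha : 0 < a) (h2a : 2 * a ≤ A)
    (hsep : ∀ x ∈ V, ∀ y ∈ V, |x - y| < a ∨ A < |x - y|) :
    ∃ (n : ℕ) (W : Fin n → Set ℝ),
      (∀ i, IsOpen (W i)) ∧
      (⋃ i, W i) = V ∧
      (∀ i j, i ≠ j → Disjoint (W i) (W j)) ∧
      (∀ i, Metric.diam (W i) ≤ a) ∧
      (∀ i j, i ≠ j → ∀ x ∈ W i, ∀ y ∈ W j, A ≤ |x - y|) := by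
  have hV : GapSeparated V a A := hsep
  obtain ⟨n, W, hW_inj, hW_range⟩ :=
    (hV.finite_clusters h2a ha (isCompact_Icc.totallyBounded.subset hVI)).fin_param
  have hW : ∀ i, W i ∈ clusters V a := fun i => hW_range ▸ mem_range_self i
  refine ⟨n, W, fun i => ?_, ?_, fun i j hij => ?_, fun i => ?_, fun i j hij u hu v hv => ?_⟩
  · obtain ⟨x, -, hx⟩ := hW i
    exact hx ▸ isOpen_cluster hVopen
  · rw [← sUnion_range, hW_range, sUnion_clusters ha]
  · exact hV.pairwiseDisjoint_clusters h2a (hW i) (hW j) (hW_inj.ne hij)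
  · obtain ⟨x, -, hx⟩ := hW i
    exact hx ▸ hV.diam_cluster_le h2a ha.le
  · exact (hV.pairwise_lt_dist_clusters h2a (hW i) (hW j) (hW_inj.ne hij) u hu v hv).le

/-- An open set `V` inside a compact interval, any two of whose points are at distance
`< a` or `> A` (`2a ≤ A`), splits into finitely many pairwise disjoint open pieces of
diameter at most `a`, any two of which are at distance at least `A`. -/
theorem open_set_splits_into_clusters
    (s t : ℝ) (hst : s ≤ t) (V : Set ℝ) (hVI : V ⊆ Set.Icc s t) (hVopen : IsOpen V)
    (a A : ℝ) (ha : 0 < a) (hA : 0 < A) (h2a : 2 * a ≤ A)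
    (hsep : ∀ x ∈ V, ∀ y ∈ V, |x - y| < a ∨ A < |x - y|) :
    ∃ (n : ℕ) (W : Fin n → Set ℝ),
      (∀ i, IsOpen (W i)) ∧
      (⋃ i, W i) = V ∧
      (∀ i j, i ≠ j → Disjoint (W i) (W j)) ∧
      (∀ i, Metric.diam (W i) ≤ a) ∧
      (∀ i j, i ≠ j → ∀ x ∈ W i, ∀ y ∈ W j, A ≤ |x - y|) :=
  open_set_splits_into_clusters_general s t V hVI hVopen a A ha h2a hsep
end

section
/- Let a, A be positive real numbers with a ≤ A < 2a, set ε = (2a − A)/3, I = [0, 2a] and V = (0, ε) ∪ (a − ε, a) ∪ (2a − 2ε, 2a − ε). Then V is an open subset of I, for all x, y ∈ V either |x − y| < a or |x − y| > A, yet the diameter of V is strictly greater than a and I \ V contains no closed interval of length A. In particular, the hypothesis 2a ≤ A cannot be removed from the alternative 'diam V ≤ a or I \ V contains a closed interval of length A'. -/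
open Set

/-- The set `V` of the statement, with `ε` as a free parameter. -/
def threeIntervals (a ε : ℝ) : Set ℝ :=
  Ioo 0 ε ∪ Ioo (a - ε) a ∪ Ioo (2 * a - 2 * ε) (2 * a - ε)

section threeIntervals

variable {a ε : ℝ}

theorem isOpen_threeIntervals (a ε : ℝ) : IsOpen (threeIntervals a ε) :=
  (isOpen_Ioo.union isOpen_Ioo).union isOpen_Ioo

theorem isBounded_threeIntervals (a ε : ℝ) : Bornology.IsBounded (threeIntervals a ε) :=
  (Metric.isBounded_Ioo _ _ |>.union (Metric.isBounded_Ioo _ _)).union (Metric.isBounded_Ioo _ _)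

theorem threeIntervals_subset_Icc (hεa : ε ≤ a) :
    threeIntervals a ε ⊆ Icc 0 (2 * a) := by
  rintro x ((⟨h₁, h₂⟩ | ⟨h₁, h₂⟩) | ⟨h₁, h₂⟩) <;> constructor <;> linarith

/-- Pairs from the first two intervals, or from the last two, are less than `a` apart;
pairs from the first and the last are more than `2a - 3ε` apart. -/
theorem abs_sub_lt_or_lt_abs_sub_of_mem_threeIntervals (hεa : ε ≤ a) {x y : ℝ}
    (hx : x ∈ threeIntervals a ε) (hy : y ∈ threeIntervals a ε) :
    |x - y| < a ∨ 2 * a - 3 * ε < |x - y| := by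
  rw [abs_sub_lt_iff, lt_abs]
  rcases hx with (⟨hx₁, hx₂⟩ | ⟨hx₁, hx₂⟩) | ⟨hx₁, hx₂⟩ <;>
    rcases hy with (⟨hy₁, hy₂⟩ | ⟨hy₁, hy₂⟩) | ⟨hy₁, hy₂⟩ <;>
    first
      | exact Or.inl ⟨by linarith, by linarith⟩
      | exact Or.inr (Or.inl (by linarith))
      | exact Or.inr (Or.inr (by linarith))

theorem lt_diam_threeIntervals (hε : 0 < ε) (hεa : 2 * ε < a) :
    a < Metric.diam (threeIntervals a ε) := by
  have hx : ε / 2 ∈ threeIntervals a ε := Or.inl (Or.inl ⟨by linarith, by linarith⟩)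
  have hy : 2 * a - 3 * ε / 2 ∈ threeIntervals a ε := Or.inr ⟨by linarith, by linarith⟩
  calc a < |ε / 2 - (2 * a - 3 * ε / 2)| := by
        rw [abs_of_neg (by linarith)]; linarith
    _ ≤ _ := Metric.dist_le_diam_of_mem (isBounded_threeIntervals a ε) hx hy

/-- Such an interval starts in `[0, 3ε]`; it contains the point `a - ε/2` of the middle
interval unless it starts after it, and then it contains `2a - 3ε/2` from the last one. -/
theorem not_disjoint_Icc_threeIntervals (hε : 0 < ε) (hεa : 3 * ε ≤ a) {c : ℝ}
    (hc : Icc c (c + (2 * a - 3 * ε)) ⊆ Icc 0 (2 * a)) :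
    ¬ Disjoint (Icc c (c + (2 * a - 3 * ε))) (threeIntervals a ε) := by
  have hc₀ : 0 ≤ c := (hc (left_mem_Icc.mpr (by linarith))).1
  have hc₁ : c + (2 * a - 3 * ε) ≤ 2 * a := (hc (right_mem_Icc.mpr (by linarith))).2
  rw [not_disjoint_iff]
  rcases le_or_gt c (a - ε / 2) with hca | hca
  · exact ⟨a - ε / 2, ⟨hca, by linarith⟩, Or.inl (Or.inr ⟨by linarith, by linarith⟩)⟩
  · exact ⟨2 * a - 3 * ε / 2, ⟨by linarith, by linarith⟩, Or.inr ⟨by linarith, by linarith⟩⟩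

end threeIntervals

theorem counterexample_without_2a_le_A_general
    (a A : ℝ) (haA : a ≤ A) (hA2a : A < 2 * a) :
    let ε := (2 * a - A) / 3
    let I := Set.Icc (0 : ℝ) (2 * a)
    let V := Set.Ioo (0 : ℝ) ε ∪ Set.Ioo (a - ε) a ∪ Set.Ioo (2 * a - 2 * ε) (2 * a - ε)
    IsOpen V ∧ V ⊆ I ∧
      (∀ x ∈ V, ∀ y ∈ V, |x - y| < a ∨ A < |x - y|) ∧
      a < Metric.diam V ∧
      ¬ ∃ c : ℝ, Set.Icc c (c + A) ⊆ I \ V := by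
  intro ε I V
  have hε : 0 < ε := by simp only [ε]; linarith
  have hεa : 3 * ε ≤ a := by simp only [ε]; linarith
  have hA : 2 * a - 3 * ε = A := by simp only [ε]; ring
  refine ⟨isOpen_threeIntervals a ε, threeIntervals_subset_Icc (by linarith),
    fun x hx y hy => hA ▸ abs_sub_lt_or_lt_abs_sub_of_mem_threeIntervals (by linarith) hx hy,
    lt_diam_threeIntervals hε (by linarith), ?_⟩
  rintro ⟨c, hc⟩
  rw [subset_sdiff, ← hA] at hc
  exact not_disjoint_Icc_threeIntervals hε hεa hc.1 hc.2

/-- Counterexample showing that the hypothesis `2a ≤ A` cannot be removed from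
Lemma 1: for `a ≤ A < 2a` there is an open `V ⊆ [0, 2a]` satisfying the separation
condition, with `diam V > a` and no closed interval of length `A` in `[0,2a] \ V`. -/
theorem counterexample_without_2a_le_A
    (a A : ℝ) (ha : 0 < a) (haA : a ≤ A) (hA2a : A < 2 * a) :
    let ε := (2 * a - A) / 3
    let I := Set.Icc (0 : ℝ) (2 * a)
    let V := Set.Ioo (0 : ℝ) ε ∪ Set.Ioo (a - ε) a ∪ Set.Ioo (2 * a - 2 * ε) (2 * a - ε)
    IsOpen V ∧ V ⊆ I ∧
      (∀ x ∈ V, ∀ y ∈ V, |x - y| < a ∨ A < |x - y|) ∧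
      a < Metric.diam V ∧
      ¬ ∃ c : ℝ, Set.Icc c (c + A) ⊆ I \ V :=
  counterexample_without_2a_le_A_general a A haA hA2a
end
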